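/- arXiv:2105.05006 — 5 statements merged into one kernel-verified Lean document; each statement's English description precedes it below -/
import Mathlib

section
/- Let F : (A, E₁) → (B, E₂) be an exact functor between exact categories, and let E₂' be another exact structure on B. Then E₁' := {(μ, π) ∈ E₁ : (F μ, F π) ∈ E₂'} is an exact structure on A. -/
/-!
The axioms [E0] and [E1] for `E₁'` are formal, because in an exact structure the deflation of a
conflation may be replaced by any cokernel of its inflation: `F` carries the `E₁`-conflation
supplied by the axioms of `E₁` to a kernel–cokernel pair, which therefore lies in `E₂'` as soon
as its inflation is an `E₂'`-inflation.

For [E2], push out an `E₁'`-inflation `μ` along `f` in `A`, giving a conflation `(h, π)`, and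
push out `F μ` along `F f` in `B` inside `E₂'`. The universal map `k` from the second pushout to
`F` of the first is a morphism of kernel–cokernel pairs that is the identity on the left and an
isomorphism on the right. By the short five lemma for `E₂'`, which only needs the source row to
be an `E₂'`-conflation, `k` is an isomorphism, so `(F h, F π) ∈ E₂'`.

The dual axioms follow by running the same arguments in the opposite categories.
-/

open CategoryTheory CategoryTheory.Limits

/-- `(μ, π)` is a kernel-cokernel pair: `μ` is a kernel of `π` and `π` a cokernel of `μ`. -/
def IsKernelCokernelPair {C : Type*} [Category C] [Preadditive C]
    {X Y Z : C} (μ : X ⟶ Y) (π : Y ⟶ Z) : Prop :=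
  ∃ w : μ ≫ π = 0,
    Nonempty (IsLimit (KernelFork.ofι μ w)) ∧ Nonempty (IsColimit (CokernelCofork.ofπ π w))

/-- An exact structure in the sense of Quillen–Bühler: a class of kernel-cokernel pairs,
closed under isomorphisms, satisfying axioms [E0], [E0ᵒᵖ], [E1], [E1ᵒᵖ], [E2], [E2ᵒᵖ]. -/
structure ExactStructure (C : Type*) [Category C] [Preadditive C] where
  /-- the class of kernel-cokernel pairs ("short exact sequences") -/
  E : ∀ ⦃X Y Z : C⦄, (X ⟶ Y) → (Y ⟶ Z) → Prop
  pair : ∀ ⦃X Y Z : C⦄ ⦃μ : X ⟶ Y⦄ ⦃π : Y ⟶ Z⦄, E μ π → IsKernelCokernelPair μ π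
  iso_closed : ∀ ⦃X Y Z X' Y' Z' : C⦄ ⦃μ : X ⟶ Y⦄ ⦃π : Y ⟶ Z⦄ ⦃μ' : X' ⟶ Y'⦄ ⦃π' : Y' ⟶ Z'⦄
      (a : X ≅ X') (b : Y ≅ Y') (c : Z ≅ Z'),
      μ ≫ b.hom = a.hom ≫ μ' → π ≫ c.hom = b.hom ≫ π' → E μ π → E μ' π'
  E0 : ∀ X : C, ∃ (Z : C) (π : X ⟶ Z), E (𝟙 X) π
  E0op : ∀ X : C, ∃ (W : C) (μ : W ⟶ X), E μ (𝟙 X)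
  E1 : ∀ ⦃X Y Z : C⦄ ⦃μ : X ⟶ Y⦄ ⦃ν : Y ⟶ Z⦄,
      (∃ (W : C) (π : Y ⟶ W), E μ π) → (∃ (W : C) (π : Z ⟶ W), E ν π) →
      ∃ (W : C) (π : Z ⟶ W), E (μ ≫ ν) π
  E1op : ∀ ⦃X Y Z : C⦄ ⦃π : X ⟶ Y⦄ ⦃ρ : Y ⟶ Z⦄,
      (∃ (W : C) (μ : W ⟶ X), E μ π) → (∃ (W : C) (μ : W ⟶ Y), E μ ρ) →
      ∃ (W : C) (μ : W ⟶ X), E μ (π ≫ ρ)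
  E2 : ∀ ⦃X Y Z : C⦄ ⦃μ : X ⟶ Y⦄ (f : X ⟶ Z), (∃ (W : C) (π : Y ⟶ W), E μ π) →
      ∃ (P : C) (g : Y ⟶ P) (h : Z ⟶ P) (comm : μ ≫ g = f ≫ h),
        Nonempty (IsColimit (PushoutCocone.mk g h comm)) ∧ ∃ (W : C) (π : P ⟶ W), E h π
  E2op : ∀ ⦃X Y Z : C⦄ ⦃π : Y ⟶ Z⦄ (f : X ⟶ Z), (∃ (W : C) (μ : W ⟶ Y), E μ π) →
      ∃ (P : C) (g : P ⟶ Y) (h : P ⟶ X) (comm : g ≫ π = h ≫ f),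
        Nonempty (IsLimit (PullbackCone.mk g h comm)) ∧ ∃ (W : C) (μ : W ⟶ P), E μ h

namespace IsKernelCokernelPair

variable {C : Type*} [Category C] [Preadditive C] {X Y Z : C} {μ : X ⟶ Y} {π : Y ⟶ Z}

theorem comp_eq_zero (h : IsKernelCokernelPair μ π) : μ ≫ π = 0 := h.1

noncomputable def isLimit (h : IsKernelCokernelPair μ π) :
    IsLimit (KernelFork.ofι μ h.comp_eq_zero) :=
  h.2.1.some

noncomputable def isColimit (h : IsKernelCokernelPair μ π) :
    IsColimit (CokernelCofork.ofπ π h.comp_eq_zero) :=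
  h.2.2.some

theorem mono (h : IsKernelCokernelPair μ π) : Mono μ :=
  mono_of_isLimit_fork h.isLimit

theorem epi (h : IsKernelCokernelPair μ π) : Epi π :=
  epi_of_isColimit_cofork h.isColimit

theorem exists_lift (h : IsKernelCokernelPair μ π) {T : C} (k : T ⟶ Y) (hk : k ≫ π = 0) :
    ∃ l : T ⟶ X, l ≫ μ = k :=
  ⟨_, (KernelFork.IsLimit.lift' h.isLimit k hk).2⟩

theorem exists_desc (h : IsKernelCokernelPair μ π) {T : C} (k : Y ⟶ T) (hk : μ ≫ k = 0) :
    ∃ d : Z ⟶ T, π ≫ d = k :=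
  ⟨_, (CokernelCofork.IsColimit.desc' h.isColimit k hk).2⟩

theorem op (h : IsKernelCokernelPair μ π) : IsKernelCokernelPair π.op μ.op :=
  ⟨_, ⟨CokernelCofork.IsColimit.ofπOp π h.comp_eq_zero h.isColimit⟩,
    ⟨KernelFork.IsLimit.ofιOp μ h.comp_eq_zero h.isLimit⟩⟩

end IsKernelCokernelPair

section

variable {C : Type*} [Category C] [Preadditive C]

theorem CategoryTheory.Limits.CokernelCofork.IsColimit.exists_iso_comp_eq
    {X Y Z Z' : C} {μ : X ⟶ Y} {π : Y ⟶ Z} {π' : Y ⟶ Z'} {w : μ ≫ π = 0} {w' : μ ≫ π' = 0}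
    (hc : IsColimit (CokernelCofork.ofπ π w)) (hc' : IsColimit (CokernelCofork.ofπ π' w')) :
    ∃ t : Z ≅ Z', π ≫ t.hom = π' :=
  ⟨hc.coconePointUniqueUpToIso hc', hc.comp_coconePointUniqueUpToIso_hom hc' .one⟩

noncomputable def CategoryTheory.IsPushout.isColimitCokernelCoforkComp
    {X Y Z P W : C} {μ : X ⟶ Y} {f : X ⟶ Z} {g : Y ⟶ P} {h : Z ⟶ P} (hpo : IsPushout μ f g h)
    {π : P ⟶ W} {w : h ≫ π = 0} (hπ : IsColimit (CokernelCofork.ofπ π w)) :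
    IsColimit (CokernelCofork.ofπ (g ≫ π) (by rw [hpo.w_assoc, w, comp_zero])) := by
  have : Epi π := epi_of_isColimit_cofork hπ
  have hπdesc {T : C} (k : P ⟶ T) (hk) : π ≫ Cofork.IsColimit.desc hπ k hk = k :=
    Cofork.IsColimit.π_desc' hπ k hk
  refine CokernelCofork.IsColimit.ofπ _ _
    (fun k hk ↦ Cofork.IsColimit.desc hπ (hpo.desc k 0 (by rw [hk, comp_zero])) (by simp))
    (fun k hk ↦ by simp [hπdesc]) (fun k hk m hm ↦ ?_)
  rw [← cancel_epi π, hπdesc]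
  refine hpo.hom_ext ?_ ?_
  · simpa using hm
  · simp [reassoc_of% w]

namespace ExactStructure

def op (S : ExactStructure C) : ExactStructure Cᵒᵖ where
  E _ _ _ μ π := S.E π.unop μ.unop
  pair _ _ _ _ _ h := (S.pair h).op
  iso_closed _ _ _ _ _ _ _ _ _ _ a b c h₁ h₂ h := by
    refine S.iso_closed c.unop.symm b.unop.symm a.unop.symm ?_ ?_ h
    · have := congrArg Quiver.Hom.unop h₂
      simp only [unop_comp] at this
      simp [← cancel_epi c.unop.hom, ← cancel_mono b.unop.hom, this]
    · have := congrArg Quiver.Hom.unop h₁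
      simp only [unop_comp] at this
      simp [← cancel_epi b.unop.hom, ← cancel_mono a.unop.hom, this]
  E0 X := by
    obtain ⟨W, μ, h⟩ := S.E0op X.unop
    exact ⟨Opposite.op W, μ.op, h⟩
  E0op X := by
    obtain ⟨Z, π, h⟩ := S.E0 X.unop
    exact ⟨Opposite.op Z, π.op, h⟩
  E1 _ _ _ _ _ := by
    rintro ⟨_, π, hπ⟩ ⟨_, ρ, hρ⟩
    obtain ⟨W, μ, h⟩ := S.E1op ⟨_, _, hρ⟩ ⟨_, _, hπ⟩
    exact ⟨Opposite.op W, μ.op, h⟩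
  E1op _ _ _ _ _ := by
    rintro ⟨_, μ, hμ⟩ ⟨_, ν, hν⟩
    obtain ⟨W, π, h⟩ := S.E1 ⟨_, _, hν⟩ ⟨_, _, hμ⟩
    exact ⟨Opposite.op W, π.op, h⟩
  E2 _ _ _ _ f := by
    rintro ⟨_, π, hπ⟩
    obtain ⟨P, g, h, comm, hpb, W, ι, hι⟩ := S.E2op f.unop ⟨_, _, hπ⟩
    have hpo := (IsPullback.mk ⟨comm⟩ hpb).op.flip
    exact ⟨Opposite.op P, g.op, h.op, hpo.w, hpo.isColimit', Opposite.op W, ι.op, hι⟩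
  E2op _ _ _ _ f := by
    rintro ⟨_, μ, hμ⟩
    obtain ⟨P, g, h, comm, hpo, W, ρ, hρ⟩ := S.E2 f.unop ⟨_, _, hμ⟩
    have hpb := (IsPushout.mk ⟨comm⟩ hpo).op.flip
    exact ⟨Opposite.op P, g.op, h.op, hpb.w, hpb.isLimit', Opposite.op W, ρ.op, hρ⟩

theorem E_of_isColimit (S : ExactStructure C) {X Y Z Z' : C} {μ : X ⟶ Y} {π : Y ⟶ Z}
    (hE : S.E μ π) {π' : Y ⟶ Z'} {w' : μ ≫ π' = 0}
    (hc : IsColimit (CokernelCofork.ofπ π' w')) : S.E μ π' := by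
  obtain ⟨t, ht⟩ := CokernelCofork.IsColimit.exists_iso_comp_eq (S.pair hE).isColimit hc
  exact S.iso_closed (Iso.refl X) (Iso.refl Y) t (by simp) (by simpa using ht) hE

theorem isIso_of_E_of_isKernelCokernelPair (S : ExactStructure C) {X Y Z Y' Z' : C}
    {a : X ⟶ Y} {b : Y ⟶ Z} (hab : S.E a b) {a' : X ⟶ Y'} {b' : Y' ⟶ Z'}
    (hab' : IsKernelCokernelPair a' b') {v : Y ⟶ Y'} (t : Z ≅ Z')
    (hav : a ≫ v = a') (hbv : v ≫ b' = b ≫ t.hom) : IsIso v := by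
  obtain ⟨Q, p, q, comm, hpb, K, ι, hι⟩ := S.E2op (b' ≫ t.inv) ⟨X, a, hab⟩
  have hpb : IsPullback p q b (b' ≫ t.inv) := ⟨⟨comm⟩, hpb⟩
  have hqb : q ≫ b' = p ≫ b ≫ t.hom := by simp [reassoc_of% comm]
  replace hab := S.pair hab
  replace hι := S.pair hι
  have := hab'.mono
  have := hι.epi
  -- `m` splits `p`; then `p + n ≫ a` vanishes on the kernel `ι` of `q` and descends to the
  -- inverse `s` of `v`.
  obtain ⟨m, hmp, hmq⟩ := hpb.exists_lift (𝟙 Y) v (by simp [reassoc_of% hbv])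
  obtain ⟨n, hn⟩ := hab'.exists_lift ((𝟙 Q - p ≫ m) ≫ q) (by simp [hqb, reassoc_of% hmp])
  obtain ⟨j, hj⟩ := hab.exists_lift (ι ≫ p) (by simp [comm, reassoc_of% hι.comp_eq_zero])
  have hιn : ι ≫ n = -j := by
    rw [← cancel_mono a', Category.assoc, hn, Preadditive.neg_comp, ← hav, reassoc_of% hj]
    simp [hmq, hι.comp_eq_zero]
  obtain ⟨s, hs⟩ := hι.exists_desc (p + n ≫ a) (by simp [reassoc_of% hιn, hj])
  have hmn : m ≫ n = 0 := by
    rw [← cancel_mono a']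
    simp [hn, reassoc_of% hmp, hmq]
  refine ⟨s, ?_, ?_⟩
  · rw [← hmq, Category.assoc, hs]
    simp [hmp, reassoc_of% hmn]
  · rw [← cancel_epi q, reassoc_of% hs]
    simp [hav, hn, hmq]

end ExactStructure

end

section

variable {A B : Type*} [Category A] [Preadditive A] [Category B] [Preadditive B]

def CategoryTheory.Functor.PreservesKernelCokernelPairsOf (F : A ⥤ B) (S : ExactStructure A) :
    Prop :=
  ∀ ⦃X Y Z : A⦄ ⦃μ : X ⟶ Y⦄ ⦃π : Y ⟶ Z⦄, S.E μ π → IsKernelCokernelPair (F.map μ) (F.map π)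

theorem CategoryTheory.Functor.PreservesKernelCokernelPairsOf.op {F : A ⥤ B}
    {S : ExactStructure A} (hF : F.PreservesKernelCokernelPairsOf S) :
    F.op.PreservesKernelCokernelPairsOf S.op :=
  fun _ _ _ _ _ h ↦ (hF h).op

namespace ExactStructure

section

variable {F : A ⥤ B} {S₁ : ExactStructure A} (S₂' : ExactStructure B)

theorem exists_E_id_and_E_map (hF : F.PreservesKernelCokernelPairsOf S₁) (X : A) :
    ∃ (Z : A) (π : X ⟶ Z), S₁.E (𝟙 X) π ∧ S₂'.E (F.map (𝟙 X)) (F.map π) := by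
  obtain ⟨Z, π, h⟩ := S₁.E0 X
  obtain ⟨_, _, h'⟩ := S₂'.E0 (F.obj X)
  rw [← F.map_id] at h'
  exact ⟨Z, π, h, S₂'.E_of_isColimit h' (hF h).isColimit⟩

theorem exists_E_comp_and_E_map (hF : F.PreservesKernelCokernelPairsOf S₁)
    {X Y Z : A} {μ : X ⟶ Y} {ν : Y ⟶ Z}
    (hμ : ∃ (W : A) (π : Y ⟶ W), S₁.E μ π ∧ S₂'.E (F.map μ) (F.map π))
    (hν : ∃ (W : A) (π : Z ⟶ W), S₁.E ν π ∧ S₂'.E (F.map ν) (F.map π)) :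
    ∃ (W : A) (π : Z ⟶ W), S₁.E (μ ≫ ν) π ∧ S₂'.E (F.map (μ ≫ ν)) (F.map π) := by
  obtain ⟨_, _, hμ₁, hμ₂⟩ := hμ
  obtain ⟨_, _, hν₁, hν₂⟩ := hν
  obtain ⟨W, π, h⟩ := S₁.E1 ⟨_, _, hμ₁⟩ ⟨_, _, hν₁⟩
  obtain ⟨_, _, h'⟩ := S₂'.E1 ⟨_, _, hμ₂⟩ ⟨_, _, hν₂⟩
  rw [← F.map_comp] at h'
  exact ⟨W, π, h, S₂'.E_of_isColimit h' (hF h).isColimit⟩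

theorem E_map_of_isPushout (hF : F.PreservesKernelCokernelPairsOf S₁)
    {X Y Z P W W₀ : A} {B₀ : B} {μ : X ⟶ Y} {f : X ⟶ Z} {g : Y ⟶ P} {h : Z ⟶ P}
    {π₀ : Y ⟶ W₀} {ρ₀ : F.obj Y ⟶ B₀} (hμ₁ : S₁.E μ π₀) (hμ₂ : S₂'.E (F.map μ) ρ₀)
    (hpo : IsPushout μ f g h) {π : P ⟶ W} (hπ : S₁.E h π) : S₂'.E (F.map h) (F.map π) := by
  have hgπ := hF (S₁.E_of_isColimit hμ₁ (hpo.isColimitCokernelCoforkComp (S₁.pair hπ).isColimit))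
  obtain ⟨P', g', h', comm', hpo', W', π', hπ'⟩ := S₂'.E2 (F.map f) ⟨_, _, hμ₂⟩
  have hpo' : IsPushout (F.map μ) (F.map f) g' h' := ⟨⟨comm'⟩, hpo'⟩
  obtain ⟨k, hgk, hhk⟩ :=
    hpo'.exists_desc (F.map g) (F.map h) (by simp only [← F.map_comp, hpo.w])
  obtain ⟨t, ht⟩ := CokernelCofork.IsColimit.exists_iso_comp_eq
    (hpo'.isColimitCokernelCoforkComp (S₂'.pair hπ').isColimit) hgπ.isColimit
  have hkt : k ≫ F.map π = π' ≫ t.hom := by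
    refine hpo'.hom_ext ?_ ?_
    · rw [reassoc_of% hgk, ← F.map_comp, ← ht, Category.assoc]
    · rw [reassoc_of% hhk, (hF hπ).comp_eq_zero, reassoc_of% (S₂'.pair hπ').comp_eq_zero,
        zero_comp]
  have := S₂'.isIso_of_E_of_isKernelCokernelPair hπ' (hF hπ) t hhk hkt
  exact S₂'.iso_closed (Iso.refl _) (asIso k) t (by simpa using hhk) hkt.symm hπ'

end

def restrict (S₁ : ExactStructure A) (F : A ⥤ B) (S₂' : ExactStructure B)
    (hF : F.PreservesKernelCokernelPairsOf S₁) : ExactStructure A where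
  E _ _ _ μ π := S₁.E μ π ∧ S₂'.E (F.map μ) (F.map π)
  pair _ _ _ _ _ h := S₁.pair h.1
  iso_closed _ _ _ _ _ _ _ _ _ _ a b c h₁ h₂ h :=
    ⟨S₁.iso_closed a b c h₁ h₂ h.1, S₂'.iso_closed (F.mapIso a) (F.mapIso b) (F.mapIso c)
      (by simp only [Functor.mapIso_hom, ← F.map_comp, h₁])
      (by simp only [Functor.mapIso_hom, ← F.map_comp, h₂]) h.2⟩
  E0 := exists_E_id_and_E_map S₂' hF
  E0op X := by
    obtain ⟨Z, π, h⟩ := exists_E_id_and_E_map S₂'.op hF.op (Opposite.op X)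
    exact ⟨Z.unop, π.unop, h⟩
  E1 _ _ _ _ _ := exists_E_comp_and_E_map S₂' hF
  E1op _ _ _ _ _ := by
    rintro ⟨_, μ, hμ⟩ ⟨_, ν, hν⟩
    obtain ⟨W, ι, h⟩ := exists_E_comp_and_E_map S₂'.op hF.op ⟨_, ν.op, hν⟩ ⟨_, μ.op, hμ⟩
    exact ⟨W.unop, ι.unop, h⟩
  E2 _ _ _ _ f := by
    rintro ⟨_, _, hμ₁, hμ₂⟩
    obtain ⟨P, g, h, comm, hpo, W, π, hπ⟩ := S₁.E2 f ⟨_, _, hμ₁⟩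
    exact ⟨P, g, h, comm, hpo, W, π, hπ, E_map_of_isPushout S₂' hF hμ₁ hμ₂ ⟨⟨comm⟩, hpo⟩ hπ⟩
  E2op _ _ _ _ f := by
    rintro ⟨_, μ, hμ₁, hμ₂⟩
    obtain ⟨P, g, h, comm, hpo, W, π, hπ⟩ := S₁.op.E2 f.op ⟨_, μ.op, hμ₁⟩
    have hpb := (IsPushout.mk ⟨comm⟩ hpo).unop.flip
    exact ⟨P.unop, g.unop, h.unop, hpb.w, hpb.isLimit', W.unop, π.unop, hπ,
      E_map_of_isPushout S₂'.op hF.op hμ₁ hμ₂ ⟨⟨comm⟩, hpo⟩ hπ⟩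

end ExactStructure

end

theorem stmt8_general {A B : Type*} [Category A] [Preadditive A] [Category B] [Preadditive B]
    (F : A ⥤ B) (S₁ : ExactStructure A) (S₂ S₂' : ExactStructure B)
    (hexact : ∀ {X Y Z : A} (μ : X ⟶ Y) (π : Y ⟶ Z),
      S₁.E μ π → S₂.E (F.map μ) (F.map π)) :
    ∃ S₁' : ExactStructure A, ∀ {X Y Z : A} (μ : X ⟶ Y) (π : Y ⟶ Z),
      S₁'.E μ π ↔ (S₁.E μ π ∧ S₂'.E (F.map μ) (F.map π)) :=
  ⟨S₁.restrict F S₂' fun _ _ _ μ π h ↦ S₂.pair (hexact μ π h), fun _ _ ↦ Iff.rfl⟩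

/-- Heller's theorem: for an exact functor `F : (A, E₁) ⟶ (B, E₂)` and another exact
structure `E₂'` on `B`, the class `{(μ, π) ∈ E₁ : (F μ, F π) ∈ E₂'}` is an exact
structure on `A`. -/
theorem stmt8 {A B : Type*} [Category A] [Preadditive A] [Category B] [Preadditive B]
    (F : A ⥤ B) [F.Additive] (S₁ : ExactStructure A) (S₂ S₂' : ExactStructure B)
    (hexact : ∀ {X Y Z : A} (μ : X ⟶ Y) (π : Y ⟶ Z),
      S₁.E μ π → S₂.E (F.map μ) (F.map π)) :
    ∃ S₁' : ExactStructure A, ∀ {X Y Z : A} (μ : X ⟶ Y) (π : Y ⟶ Z),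
      S₁'.E μ π ↔ (S₁.E μ π ∧ S₂'.E (F.map μ) (F.map π)) :=
  stmt8_general F S₁ S₂ S₂' hexact
end

section
/- Let A be a Banach algebra with a contractive (or bounded) approximate identity and E a Banach right A-module with contractive module action. Then the linear span of {x·a : x ∈ E, a ∈ A} is dense in E if and only if every x ∈ E factors as x = x'·a for some x' ∈ E, a ∈ A. -/
open Unitization

noncomputable section CohenAux
set_option linter.unusedSectionVars false

variable {A : Type*} [NonUnitalNormedRing A] [NormedSpace ℂ A]
    [IsScalarTower ℂ A A] [SMulCommClass ℂ A A] [CompleteSpace A]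
variable {E : Type*} [NormedAddCommGroup E] [NormedSpace ℂ E] [CompleteSpace E]

abbrev CohenB (A : Type*) [NonUnitalNormedRing A] [NormedSpace ℂ A] :=
  WithLp 1 (Unitization ℂ A)

def cιB (a : A) : CohenB A := (WithLp.equiv 1 (Unitization ℂ A)).symm (a : Unitization ℂ A)
def cσB (u : CohenB A) : ℂ := (WithLp.equiv 1 (Unitization ℂ A) u).fst
def cτB (u : CohenB A) : A := (WithLp.equiv 1 (Unitization ℂ A) u).snd

@[simp] lemma cσB_one : cσB (1 : CohenB A) = 1 := rfl
@[simp] lemma cτB_one : cτB (1 : CohenB A) = 0 := rfl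
@[simp] lemma cσB_mul (u v : CohenB A) : cσB (u * v) = cσB u * cσB v := rfl
@[simp] lemma cτB_mul (u v : CohenB A) :
    cτB (u * v) = cσB u • cτB v + cσB v • cτB u + cτB u * cτB v := rfl
@[simp] lemma cσB_add (u v : CohenB A) : cσB (u + v) = cσB u + cσB v := rfl
@[simp] lemma cτB_add (u v : CohenB A) : cτB (u + v) = cτB u + cτB v := rfl
@[simp] lemma cσB_sub (u v : CohenB A) : cσB (u - v) = cσB u - cσB v := rfl
@[simp] lemma cτB_sub (u v : CohenB A) : cτB (u - v) = cτB u - cτB v := rfl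
@[simp] lemma cσB_smul (γ : ℂ) (u : CohenB A) : cσB (γ • u) = γ * cσB u := rfl
@[simp] lemma cτB_smul (γ : ℂ) (u : CohenB A) : cτB (γ • u) = γ • cτB u := rfl
@[simp] lemma cσB_iota (a : A) : cσB (cιB a) = 0 := rfl
@[simp] lemma cτB_iota (a : A) : cτB (cιB a) = a := rfl

lemma cB_norm (u : CohenB A) : ‖u‖ = ‖cσB u‖ + ‖cτB u‖ :=
  WithLp.unitization_norm_def u

@[simp] lemma cB_norm_one : ‖(1 : CohenB A)‖ = 1 := by rw [cB_norm]; simp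
lemma cB_norm_iota (a : A) : ‖cιB a‖ = ‖a‖ := by rw [cB_norm]; simp

lemma cB_ext {u v : CohenB A} (h1 : cσB u = cσB v) (h2 : cτB u = cτB v) : u = v := by
  apply (WithLp.equiv 1 (Unitization ℂ A)).injective
  exact Unitization.ext h1 h2

lemma cB_norm_pow_le (s : CohenB A) (n : ℕ) : ‖s ^ n‖ ≤ ‖s‖ ^ n := by
  cases n with
  | zero => simp
  | succ n => exact norm_pow_le' s n.succ_pos

lemma cB_norm_inv_oneSub_le (s : CohenB A) (hs : ‖s‖ < 1) :
    ‖(((Units.oneSub s hs)⁻¹ : (CohenB A)ˣ) : CohenB A)‖ ≤ (1 - ‖s‖)⁻¹ := by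
  have h : (((Units.oneSub s hs)⁻¹ : (CohenB A)ˣ) : CohenB A) = ∑' n : ℕ, s ^ n := rfl
  rw [h]
  exact tsum_of_norm_bounded (hasSum_geometric_of_lt_one (norm_nonneg s) hs)
    (cB_norm_pow_le s)

lemma cohen_unit (c M : ℝ) (hM : 1 ≤ M) (hc0 : 0 < c) (hc : c * (M + 1) ≤ 1/2)
    (e : A) (he : ‖e‖ ≤ M) :
    ∃ F : (CohenB A)ˣ,
      (F : CohenB A) = ((1 - c : ℝ) : ℂ) • 1 + ((c : ℝ) : ℂ) • cιB e ∧
      ‖((F⁻¹ : (CohenB A)ˣ) : CohenB A)‖ ≤ 2 ∧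
      cιB e * ((F⁻¹ : (CohenB A)ˣ) : CohenB A)
        = ((F⁻¹ : (CohenB A)ˣ) : CohenB A) * cιB e := by
  have hM0 : 0 < M := lt_of_lt_of_le one_pos hM
  have hcM : c * M ≤ 1/2 - c := by nlinarith
  have hc1 : c < 1/2 := by nlinarith
  have hγ0 : (0:ℝ) < 1 - c := by linarith
  set γ : ℝ := 1 - c with hγdef
  set t : CohenB A := ((c / γ : ℝ) : ℂ) • cιB e with ht
  have hnt : ‖t‖ ≤ c * M / γ := by
    rw [ht, norm_smul, cB_norm_iota]
    have : ‖((c / γ : ℝ) : ℂ)‖ = c / γ := by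
      rw [Complex.norm_real, Real.norm_eq_abs, abs_of_pos (by positivity)]
    rw [this, div_mul_eq_mul_div]
    gcongr
  have hnt1 : ‖t‖ < 1 := by
    refine lt_of_le_of_lt hnt ?_
    rw [div_lt_one hγ0]
    nlinarith
  have hnegt : ‖-t‖ < 1 := by rwa [norm_neg]
  -- the scalar unit
  have hγC : ((γ : ℝ) : ℂ) ≠ 0 := by
    simpa using ne_of_gt hγ0
  set U1 : (CohenB A)ˣ :=
    Units.map (algebraMap ℂ (CohenB A)).toMonoidHom (Units.mk0 ((γ:ℝ):ℂ) hγC) with hU1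
  have hU1val : (U1 : CohenB A) = ((γ:ℝ):ℂ) • 1 := by
    rw [hU1]
    simp [Algebra.algebraMap_eq_smul_one]
  have hU1inv : ((U1⁻¹ : (CohenB A)ˣ) : CohenB A) = (((γ:ℝ):ℂ))⁻¹ • 1 := by
    rw [hU1, Units.coe_map_inv]
    simp [Algebra.algebraMap_eq_smul_one]
  set F : (CohenB A)ˣ := U1 * Units.oneSub (-t) hnegt with hF
  have hFval : (F : CohenB A) = ((γ : ℝ) : ℂ) • 1 + ((c : ℝ) : ℂ) • cιB e := by
    rw [hF, Units.val_mul, hU1val, Units.val_oneSub, sub_neg_eq_add, smul_mul_assoc, one_mul,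
      smul_add, ht, smul_smul]
    congr 2
    rw [← Complex.ofReal_mul]
    congr 1
    field_simp
  refine ⟨F, hFval, ?_, ?_⟩
  · -- norm bound on inverse
    rw [hF, mul_inv_rev, Units.val_mul, hU1inv]
    calc ‖(((Units.oneSub (-t) hnegt)⁻¹ : (CohenB A)ˣ) : CohenB A) * ((((γ:ℝ):ℂ))⁻¹ • 1)‖
        ≤ ‖(((Units.oneSub (-t) hnegt)⁻¹ : (CohenB A)ˣ) : CohenB A)‖ * ‖(((γ:ℝ):ℂ))⁻¹ • (1 : CohenB A)‖ :=
          norm_mul_le _ _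
      _ ≤ (1 - ‖-t‖)⁻¹ * γ⁻¹ := by
          refine mul_le_mul (cB_norm_inv_oneSub_le _ hnegt) (le_of_eq ?_) (norm_nonneg _) ?_
          · rw [norm_smul, cB_norm_one, mul_one, norm_inv, Complex.norm_real,
              Real.norm_eq_abs, abs_of_pos hγ0]
          · rw [norm_neg]
            have : (0:ℝ) < 1 - ‖t‖ := by linarith
            positivity
      _ ≤ 2 := by
          rw [norm_neg]
          have h1 : 1 - ‖t‖ ≥ (1/2) / γ := by
            have : c * M / γ ≤ (1/2 - c) / γ := by gcongr
            have h2 : ‖t‖ ≤ (1/2 - c)/γ := le_trans hnt this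
            have : (1/2 - c)/γ = 1 - (1/2)/γ := by field_simp; ring
            rw [this] at h2
            linarith
          have h0 : (0:ℝ) < (1/2)/γ := by positivity
          calc (1 - ‖t‖)⁻¹ * γ⁻¹ ≤ ((1/2)/γ)⁻¹ * γ⁻¹ := by gcongr
            _ = 2 := by field_simp
  · -- commutation
    have hcomm : Commute (cιB e) (F : CohenB A) := by
      unfold Commute SemiconjBy
      rw [hFval, mul_add, add_mul, mul_smul_comm, smul_mul_assoc, mul_one, one_mul,
        mul_smul_comm, smul_mul_assoc]
    exact (hcomm.units_inv_right).eq

lemma cB_mul_one_sub_iota (u : CohenB A) (e : A) :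
    ‖u * (1 - cιB e)‖ ≤ ‖cσB u‖ * (1 + ‖e‖) + ‖cτB u * e - cτB u‖ := by
  have h1 : cσB (u * (1 - cιB e)) = cσB u := by simp
  have h2 : cτB (u * (1 - cιB e)) = -(cσB u • e) + (cτB u - cτB u * e) := by
    simp only [cτB_mul, cτB_sub, cσB_sub, cτB_one, cσB_one, cτB_iota, cσB_iota,
      zero_sub, sub_zero, one_smul, smul_neg, mul_neg]
    abel
  rw [cB_norm, h1, h2]
  have h3 : ‖-(cσB u • e) + (cτB u - cτB u * e)‖ ≤ ‖cσB u‖ * ‖e‖ + ‖cτB u * e - cτB u‖ := by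
    calc ‖-(cσB u • e) + (cτB u - cτB u * e)‖ ≤ ‖-(cσB u • e)‖ + ‖cτB u - cτB u * e‖ :=
          norm_add_le _ _
      _ = ‖cσB u‖ * ‖e‖ + ‖cτB u * e - cτB u‖ := by
          rw [norm_neg, norm_smul, norm_sub_rev]
  nlinarith [h3]


section Phi

variable (act : E → A → E)
    (hadd₁ : ∀ x y a, act (x + y) a = act x a + act y a)
    (hadd₂ : ∀ x a b, act x (a + b) = act x a + act x b)
    (hsmul₁ : ∀ (c : ℂ) x a, act (c • x) a = c • act x a)
    (hsmul₂ : ∀ (c : ℂ) x a, act x (c • a) = c • act x a)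
    (hassoc : ∀ x a b, act x (a * b) = act (act x a) b)
    (hcontr : ∀ x a, ‖act x a‖ ≤ ‖x‖ * ‖a‖)

include hadd₁ hadd₂ hsmul₁ hsmul₂ hassoc hcontr

def cΦ (x : E) (u : CohenB A) : E := act x (cτB u) + (cσB u) • x

lemma act_zero (x : E) : act x 0 = 0 := by
  have h := hadd₂ x 0 0
  rw [add_zero] at h
  have h2 : act x 0 + 0 = act x 0 + act x 0 := by rw [add_zero]; exact h
  exact (add_left_cancel h2).symm

lemma zero_act (a : A) : act 0 a = 0 := by
  have h := hadd₁ 0 0 a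
  rw [add_zero] at h
  have h2 : act 0 a + 0 = act 0 a + act 0 a := by rw [add_zero]; exact h
  exact (add_left_cancel h2).symm

lemma act_neg (x : E) (a : A) : act x (-a) = -act x a := by
  have h := hadd₂ x a (-a)
  rw [add_neg_cancel, act_zero act hadd₁ hadd₂ hsmul₁ hsmul₂ hassoc hcontr] at h
  exact (neg_eq_of_add_eq_zero_right h.symm).symm

lemma act_sub (x : E) (a b : A) : act x (a - b) = act x a - act x b := by
  rw [sub_eq_add_neg, hadd₂, act_neg act hadd₁ hadd₂ hsmul₁ hsmul₂ hassoc hcontr, sub_eq_add_neg]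

include hadd₁ in
lemma sub_act (x y : E) (a : A) : act (x - y) a = act x a - act y a := by
  have h := hadd₁ (x - y) y a
  rw [sub_add_cancel] at h
  rw [h]; abel

lemma cΦ_one (x : E) : cΦ act x 1 = x := by
  simp [cΦ, act_zero act hadd₁ hadd₂ hsmul₁ hsmul₂ hassoc hcontr]

lemma cΦ_norm (x : E) (u : CohenB A) : ‖cΦ act x u‖ ≤ ‖x‖ * ‖u‖ := by
  calc ‖cΦ act x u‖ ≤ ‖act x (cτB u)‖ + ‖cσB u • x‖ := norm_add_le _ _
    _ ≤ ‖x‖ * ‖cτB u‖ + ‖cσB u‖ * ‖x‖ := by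
        gcongr
        · exact hcontr x _
        · rw [norm_smul]
    _ = ‖x‖ * ‖u‖ := by rw [cB_norm]; ring

lemma cΦ_mul (x : E) (u v : CohenB A) : cΦ act x (u * v) = cΦ act (cΦ act x u) v := by
  simp only [cΦ, cσB_mul, cτB_mul, hadd₂, hadd₁, hsmul₂, hassoc, hsmul₁, smul_add, smul_smul]
  module

lemma cΦ_sub (x : E) (u v : CohenB A) : cΦ act x (u - v) = cΦ act x u - cΦ act x v := by
  simp only [cΦ, cσB_sub, cτB_sub, act_sub act hadd₁ hadd₂ hsmul₁ hsmul₂ hassoc hcontr, sub_smul]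
  module

lemma cΦ_iota (x : E) (a : A) : cΦ act x (cιB a) = act x a := by simp [cΦ]

lemma cΦ_one_sub_iota (x : E) (e : A) : cΦ act x (1 - cιB e) = x - act x e := by
  rw [cΦ_sub act hadd₁ hadd₂ hsmul₁ hsmul₂ hassoc hcontr, cΦ_one act hadd₁ hadd₂ hsmul₁ hsmul₂ hassoc hcontr, cΦ_iota act hadd₁ hadd₂ hsmul₁ hsmul₂ hassoc hcontr]


lemma cΦ_smul (x : E) (γ : ℂ) (u : CohenB A) : cΦ act x (γ • u) = γ • cΦ act x u := by
  simp only [cΦ, cσB_smul, cτB_smul, hsmul₂, smul_add, mul_smul]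

lemma cΦ_sub₁ (x y : E) (u : CohenB A) :
    cΦ act (x - y) u = cΦ act x u - cΦ act y u := by
  simp only [cΦ, sub_act act hadd₁ hadd₂ hsmul₁ hsmul₂ hassoc hcontr, smul_sub]
  abel

lemma cohen_key (M : ℝ) (hM : 1 ≤ M) (c : ℝ) (hc0 : 0 < c) (hcle : c ≤ 1)
    (hc : c * (M + 1) ≤ 1/2) (x : E)
    (hL1 : ∀ ε : ℝ, 0 < ε → ∀ v : A, ∃ e, ‖e‖ ≤ M ∧ ‖act x e - x‖ < ε ∧ ‖v * e - v‖ < ε)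
    (u : (CohenB A)ˣ) (n : ℕ) :
    ∃ w : (CohenB A)ˣ,
      cσB (w : CohenB A) = ((1 - c : ℝ) : ℂ) * cσB (u : CohenB A) ∧
      ‖(w : CohenB A) - (u : CohenB A)‖ ≤ (M + 1) * ‖cσB (u : CohenB A)‖ + (1/2)^n ∧
      ‖cΦ act x ((w⁻¹ : (CohenB A)ˣ) : CohenB A)
          - cΦ act x ((u⁻¹ : (CohenB A)ˣ) : CohenB A)‖ ≤ (1/2)^n := by
  set K : ℝ := ‖((u⁻¹ : (CohenB A)ˣ) : CohenB A)‖ with hKdef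
  have hK0 : (0:ℝ) ≤ K := norm_nonneg _
  set δ : ℝ := min ((1/2)^n) ((1/2)^n / (2 * c * K + 1)) with hδdef
  have hδ0 : 0 < δ := lt_min (by positivity) (by positivity)
  have hδ1 : δ ≤ (1/2)^n := min_le_left _ _
  have hδ2 : δ ≤ (1/2)^n / (2 * c * K + 1) := min_le_right _ _
  obtain ⟨e, heM, hxe, hve⟩ := hL1 δ hδ0 (cτB (u : CohenB A))
  obtain ⟨F, hFval, hFinv, hFcomm⟩ := cohen_unit c M hM hc0 hc e heM
  have hσF : cσB ((F : CohenB A)) = ((1 - c : ℝ) : ℂ) := by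
    rw [hFval, cσB_add, cσB_smul, cσB_smul, cσB_iota, cσB_one, mul_zero, mul_one, add_zero]
  have hc_norm : ‖((c:ℝ):ℂ)‖ = c := by
    rw [Complex.norm_real, Real.norm_eq_abs, abs_of_pos hc0]
  have h1m : (1 : CohenB A) - ↑F = ((c:ℝ):ℂ) • (1 - cιB e) := by
    rw [hFval]
    simp only [Complex.ofReal_sub, Complex.ofReal_one]
    module
  refine ⟨u * F, ?_, ?_, ?_⟩
  · rw [Units.val_mul, cσB_mul, hσF, mul_comm]
  · have hdiff : (↑(u * F) : CohenB A) - ↑u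
        = -(((c:ℝ):ℂ) • ((u : CohenB A) * (1 - cιB e))) := by
      rw [Units.val_mul]
      calc (↑u : CohenB A) * ↑F - ↑u = ↑u * (↑F - 1) := by rw [mul_sub, mul_one]
        _ = ↑u * (-(((c:ℝ):ℂ) • (1 - cιB e))) := by
            rw [show ((F : CohenB A) - 1) = -((1:CohenB A) - ↑F) by abel, h1m]
        _ = -(((c:ℝ):ℂ) • ((u : CohenB A) * (1 - cιB e))) := by
            rw [mul_neg, mul_smul_comm]
    rw [hdiff, norm_neg, norm_smul, hc_norm]
    have hb := cB_mul_one_sub_iota (u : CohenB A) e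
    have hb2 : ‖(u : CohenB A) * (1 - cιB e)‖
        ≤ ‖cσB (u : CohenB A)‖ * (1 + M) + δ := by
      refine le_trans hb ?_
      have hve' := le_of_lt hve
      gcongr
    calc c * ‖(u : CohenB A) * (1 - cιB e)‖
        ≤ c * (‖cσB (u : CohenB A)‖ * (1 + M) + δ) := by gcongr
      _ ≤ (M + 1) * ‖cσB (u : CohenB A)‖ + (1/2)^n := by
          have h0 : (0:ℝ) ≤ ‖cσB (u : CohenB A)‖ := norm_nonneg _
          nlinarith
  · have hval : ((((u * F)⁻¹ : (CohenB A)ˣ)) : CohenB A)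
        = ((F⁻¹ : (CohenB A)ˣ) : CohenB A) * ((u⁻¹ : (CohenB A)ˣ) : CohenB A) := by
      rw [mul_inv_rev, Units.val_mul]
    have hcomm' : ((F⁻¹ : (CohenB A)ˣ) : CohenB A) * (1 - cιB e)
        = (1 - cιB e) * ((F⁻¹ : (CohenB A)ˣ) : CohenB A) := by
      rw [mul_sub, sub_mul, mul_one, one_mul, hFcomm]
    have h2 : ((F⁻¹ : (CohenB A)ˣ) : CohenB A) - 1
        = ((F⁻¹ : (CohenB A)ˣ) : CohenB A) * (1 - (F : CohenB A)) := by
      rw [mul_sub, mul_one, Units.inv_mul]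
    have key : ((((u * F)⁻¹ : (CohenB A)ˣ)) : CohenB A) - ((u⁻¹ : (CohenB A)ˣ) : CohenB A)
        = ((c:ℝ):ℂ) • ((1 - cιB e)
            * (((F⁻¹ : (CohenB A)ˣ) : CohenB A) * ((u⁻¹ : (CohenB A)ˣ) : CohenB A))) := by
      rw [hval]
      calc ((F⁻¹ : (CohenB A)ˣ) : CohenB A) * ((u⁻¹ : (CohenB A)ˣ) : CohenB A)
              - ((u⁻¹ : (CohenB A)ˣ) : CohenB A)
          = (((F⁻¹ : (CohenB A)ˣ) : CohenB A) - 1) * ((u⁻¹ : (CohenB A)ˣ) : CohenB A) := by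
            rw [sub_mul, one_mul]
        _ = (((F⁻¹ : (CohenB A)ˣ) : CohenB A) * (((c:ℝ):ℂ) • (1 - cιB e)))
              * ((u⁻¹ : (CohenB A)ˣ) : CohenB A) := by rw [h2, h1m]
        _ = (((c:ℝ):ℂ) • (((F⁻¹ : (CohenB A)ˣ) : CohenB A) * (1 - cιB e)))
              * ((u⁻¹ : (CohenB A)ˣ) : CohenB A) := by rw [mul_smul_comm]
        _ = (((c:ℝ):ℂ) • ((1 - cιB e) * ((F⁻¹ : (CohenB A)ˣ) : CohenB A)))
              * ((u⁻¹ : (CohenB A)ˣ) : CohenB A) := by rw [hcomm']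
        _ = ((c:ℝ):ℂ) • ((1 - cιB e)
              * (((F⁻¹ : (CohenB A)ˣ) : CohenB A) * ((u⁻¹ : (CohenB A)ˣ) : CohenB A))) := by
            rw [smul_mul_assoc, mul_assoc]
    rw [← cΦ_sub act hadd₁ hadd₂ hsmul₁ hsmul₂ hassoc hcontr, key,
      cΦ_smul act hadd₁ hadd₂ hsmul₁ hsmul₂ hassoc hcontr,
      cΦ_mul act hadd₁ hadd₂ hsmul₁ hsmul₂ hassoc hcontr,
      cΦ_one_sub_iota act hadd₁ hadd₂ hsmul₁ hsmul₂ hassoc hcontr,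
      norm_smul, hc_norm]
    have hn1 : ‖cΦ act (x - act x e)
          (((F⁻¹ : (CohenB A)ˣ) : CohenB A) * ((u⁻¹ : (CohenB A)ˣ) : CohenB A))‖
        ≤ ‖x - act x e‖ * (‖((F⁻¹ : (CohenB A)ˣ) : CohenB A)‖ * K) := by
      refine le_trans (cΦ_norm act hadd₁ hadd₂ hsmul₁ hsmul₂ hassoc hcontr _ _) ?_
      gcongr
      exact norm_mul_le _ _
    have hn2 : ‖x - act x e‖ ≤ δ := by rw [norm_sub_rev]; exact le_of_lt hxe
    calc c * ‖cΦ act (x - act x e)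
            (((F⁻¹ : (CohenB A)ˣ) : CohenB A) * ((u⁻¹ : (CohenB A)ˣ) : CohenB A))‖
        ≤ c * (δ * (2 * K)) := by
          refine mul_le_mul_of_nonneg_left ?_ (le_of_lt hc0)
          refine le_trans hn1 ?_
          have hK2 : ‖((F⁻¹ : (CohenB A)ˣ) : CohenB A)‖ * K ≤ 2 * K := by gcongr
          exact mul_le_mul hn2 hK2 (by positivity) (le_of_lt hδ0)
      _ ≤ (1/2)^n := by
          have h3 : δ * (2 * c * K + 1) ≤ (1/2)^n := by
            rw [← le_div_iff₀ (by positivity : (0:ℝ) < 2 * c * K + 1)]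
            exact hδ2
          nlinarith [hδ0.le]

lemma cohen_L1 (M : ℝ) (hM : 1 ≤ M)
    (hbai : ∀ (s : Finset A) (ε : ℝ), 0 < ε →
      ∃ e : A, ‖e‖ ≤ M ∧ ∀ a ∈ s, ‖a * e - a‖ < ε ∧ ‖e * a - a‖ < ε)
    (hdense : Dense (↑(Submodule.span ℂ {y : E | ∃ (z : E) (a : A), y = act z a}) : Set E))
    (x : E) (ε : ℝ) (hε : 0 < ε) (v : A) :
    ∃ e : A, ‖e‖ ≤ M ∧ ‖act x e - x‖ < ε ∧ ‖v * e - v‖ < ε := by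
  classical
  have key : ∀ y ∈ Submodule.span ℂ {y : E | ∃ (z : E) (a : A), y = act z a},
      ∀ δ : ℝ, 0 < δ →
      ∃ (t : Finset A) (θ : ℝ), 0 < θ ∧
        ∀ e : A, (∀ a ∈ t, ‖a * e - a‖ < θ) → ‖act y e - y‖ < δ := by
    intro y hy
    induction hy using Submodule.span_induction with
    | mem y hy =>
        obtain ⟨z, a, rfl⟩ := hy
        intro δ hδ
        refine ⟨{a}, δ / (‖z‖ + 1), by positivity, fun e he => ?_⟩
        have h1 : act (act z a) e - act z a = act z (a * e - a) := by
          rw [act_sub act hadd₁ hadd₂ hsmul₁ hsmul₂ hassoc hcontr, ← hassoc]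
        rw [h1]
        have h2 : ‖a * e - a‖ < δ / (‖z‖ + 1) := he a (Finset.mem_singleton_self a)
        calc ‖act z (a * e - a)‖ ≤ ‖z‖ * ‖a * e - a‖ := hcontr _ _
          _ ≤ ‖z‖ * (δ / (‖z‖ + 1)) :=
              mul_le_mul_of_nonneg_left (le_of_lt h2) (norm_nonneg z)
          _ < δ := by
              rw [mul_comm, div_mul_eq_mul_div, div_lt_iff₀ (by positivity)]
              nlinarith [norm_nonneg z]
    | zero =>
        intro δ hδ
        refine ⟨∅, 1, one_pos, fun e _ => ?_⟩
        rw [zero_act act hadd₁ hadd₂ hsmul₁ hsmul₂ hassoc hcontr]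
        simpa using hδ
    | add y z hys hzs ihy ihz =>
        intro δ hδ
        obtain ⟨t1, θ1, hθ1, h1⟩ := ihy (δ/2) (by positivity)
        obtain ⟨t2, θ2, hθ2, h2⟩ := ihz (δ/2) (by positivity)
        refine ⟨t1 ∪ t2, min θ1 θ2, lt_min hθ1 hθ2, fun e he => ?_⟩
        have e1 : ‖act y e - y‖ < δ/2 := h1 e (fun a ha =>
          lt_of_lt_of_le (he a (Finset.mem_union_left _ ha)) (min_le_left _ _))
        have e2 : ‖act z e - z‖ < δ/2 := h2 e (fun a ha =>
          lt_of_lt_of_le (he a (Finset.mem_union_right _ ha)) (min_le_right _ _))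
        have h3 : act (y + z) e - (y + z) = (act y e - y) + (act z e - z) := by
          rw [hadd₁]; abel
        rw [h3]
        calc ‖(act y e - y) + (act z e - z)‖ ≤ ‖act y e - y‖ + ‖act z e - z‖ :=
              norm_add_le _ _
          _ < δ := by linarith
    | smul γ y hys ih =>
        intro δ hδ
        obtain ⟨t, θ, hθ, h⟩ := ih (δ/(‖γ‖+1)) (by positivity)
        refine ⟨t, θ, hθ, fun e he => ?_⟩
        have h3 : act (γ • y) e - γ • y = γ • (act y e - y) := by
          rw [hsmul₁, smul_sub]
        rw [h3, norm_smul]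
        calc ‖γ‖ * ‖act y e - y‖ ≤ ‖γ‖ * (δ/(‖γ‖+1)) :=
              mul_le_mul_of_nonneg_left (le_of_lt (h e he)) (norm_nonneg γ)
          _ < δ := by
              rw [mul_comm, div_mul_eq_mul_div, div_lt_iff₀ (by positivity)]
              nlinarith [norm_nonneg γ]
  have hx := hdense x
  rw [Metric.mem_closure_iff] at hx
  obtain ⟨y, hy_mem, hxy⟩ := hx (ε/(2*(M+2))) (by positivity)
  rw [dist_eq_norm] at hxy
  obtain ⟨t, θ, hθ, hyθ⟩ := key y hy_mem (ε/2) (by positivity)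
  obtain ⟨e, heM, hbprops⟩ := hbai (insert v t) (min θ ε) (lt_min hθ hε)
  refine ⟨e, heM, ?_, ?_⟩
  · have hye : ‖act y e - y‖ < ε/2 := hyθ e (fun a ha =>
      lt_of_lt_of_le (hbprops a (Finset.mem_insert_of_mem ha)).1 (min_le_left _ _))
    have hsplit : act x e - x = act (x - y) e + (act y e - y) + (y - x) := by
      rw [sub_act act hadd₁ hadd₂ hsmul₁ hsmul₂ hassoc hcontr]; abel
    rw [hsplit]
    have hxy' : ‖x - y‖ < ε/(2*(M+2)) := hxy
    have hr : ‖x - y‖ * (M + 1) < ε/2 := by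
      calc ‖x - y‖ * (M + 1) < (ε/(2*(M+2))) * (M + 1) :=
            mul_lt_mul_of_pos_right hxy' (by linarith)
        _ ≤ ε/2 := by
            rw [div_mul_eq_mul_div, div_le_div_iff₀ (by linarith) (by norm_num)]
            nlinarith
    calc ‖act (x - y) e + (act y e - y) + (y - x)‖
        ≤ ‖act (x - y) e‖ + ‖act y e - y‖ + ‖y - x‖ := norm_add₃_le
      _ ≤ ‖x - y‖ * M + ‖act y e - y‖ + ‖x - y‖ := by
          gcongr
          · exact le_trans (hcontr _ _) (by gcongr)
          · rw [norm_sub_rev]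
      _ < ε := by nlinarith [norm_nonneg (x - y)]
  · exact lt_of_lt_of_le (hbprops v (Finset.mem_insert_self v t)).1 (min_le_right θ ε)

lemma cohen_hard (M : ℝ) (hM : 1 ≤ M)
    (hbai : ∀ (s : Finset A) (ε : ℝ), 0 < ε →
      ∃ e : A, ‖e‖ ≤ M ∧ ∀ a ∈ s, ‖a * e - a‖ < ε ∧ ‖e * a - a‖ < ε)
    (hdense : Dense (↑(Submodule.span ℂ {y : E | ∃ (z : E) (a : A), y = act z a}) : Set E))
    (x : E) : ∃ (x' : E) (a : A), x = act x' a := by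
  classical
  set c : ℝ := (2*(M+1))⁻¹ with hcdef
  have hM0 : (0:ℝ) < M + 1 := by linarith
  have hc0 : 0 < c := by rw [hcdef]; positivity
  have hceq : c * (M + 1) = 1/2 := by rw [hcdef]; field_simp
  have hc : c * (M + 1) ≤ 1/2 := le_of_eq hceq
  have hcle : c ≤ 1 := by nlinarith
  have hc1 : c < 1 := by nlinarith
  have h1c0 : (0:ℝ) < 1 - c := by linarith
  have h1c1 : 1 - c < 1 := by linarith
  have hL1 := cohen_L1 act hadd₁ hadd₂ hsmul₁ hsmul₂ hassoc hcontr M hM hbai hdense x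
  let ckey := fun (u : (CohenB A)ˣ) (n : ℕ) =>
    cohen_key act hadd₁ hadd₂ hsmul₁ hsmul₂ hassoc hcontr M hM c hc0 hcle hc x hL1 u n
  let step : (CohenB A)ˣ → ℕ → (CohenB A)ˣ := fun u n => Classical.choose (ckey u n)
  let U : ℕ → (CohenB A)ˣ := fun n => Nat.rec 1 (fun n u => step u n) n
  have hU : ∀ n, U (n+1) = step (U n) n := fun n => rfl
  have spec : ∀ n,
      cσB (U (n+1)).val = ((1 - c : ℝ) : ℂ) * cσB (U n).val ∧
      ‖(U (n+1)).val - (U n).val‖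
        ≤ (M+1) * ‖cσB (U n).val‖ + (1/2)^n ∧
      ‖cΦ act x ((U (n+1))⁻¹).val
        - cΦ act x ((U n)⁻¹).val‖ ≤ (1/2)^n := by
    intro n
    rw [hU n]
    exact Classical.choose_spec (ckey (U n) n)
  have hσ : ∀ n, cσB (U n).val = (((1-c)^n : ℝ) : ℂ) := by
    intro n
    induction n with
    | zero =>
        have h0 : U 0 = 1 := rfl
        rw [h0, Units.val_one, cσB_one]
        norm_num
    | succ n ih =>
        rw [(spec n).1, ih, pow_succ]
        push_cast
        ring
  have hσn : ∀ n, ‖cσB (U n).val‖ = (1-c)^n := by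
    intro n
    rw [hσ n, Complex.norm_real, Real.norm_eq_abs, abs_of_nonneg (pow_nonneg h1c0.le n)]
  have hsum1 : Summable (fun n : ℕ => (M+1) * (1-c)^n + (1/2)^n) :=
    ((summable_geometric_of_lt_one h1c0.le h1c1).mul_left (M+1)).add
      (summable_geometric_of_lt_one (by norm_num) (by norm_num))
  have hcauchy1 : CauchySeq (fun n => (U n).val) := by
    refine cauchySeq_of_dist_le_of_summable _ ?_ hsum1
    intro n
    rw [dist_eq_norm, norm_sub_rev]
    calc ‖(U (n+1)).val - (U n).val‖
        ≤ (M+1) * ‖cσB (U n).val‖ + (1/2)^n := (spec n).2.1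
      _ = (M+1) * (1-c)^n + (1/2)^n := by rw [hσn]
  obtain ⟨Lq, hLq⟩ := cauchySeq_tendsto_of_complete hcauchy1
  have hcauchy2 : CauchySeq (fun n => cΦ act x ((U n)⁻¹).val) := by
    refine cauchySeq_of_dist_le_of_summable (fun n => (1/2)^n) ?_
      (summable_geometric_of_lt_one (by norm_num) (by norm_num))
    intro n
    rw [dist_eq_norm, norm_sub_rev]
    exact (spec n).2.2
  obtain ⟨x', hx'⟩ := cauchySeq_tendsto_of_complete hcauchy2
  have hσlip : ∀ u v : CohenB A, ‖cσB u - cσB v‖ ≤ ‖u - v‖ := by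
    intro u v
    rw [← cσB_sub, cB_norm (u - v)]
    linarith [norm_nonneg (cτB (u - v))]
  have hτlip : ∀ u v : CohenB A, ‖cτB u - cτB v‖ ≤ ‖u - v‖ := by
    intro u v
    rw [← cτB_sub, cB_norm (u - v)]
    linarith [norm_nonneg (cσB (u - v))]
  have hσcont : Continuous (cσB : CohenB A → ℂ) := by
    refine LipschitzWith.continuous (K := 1) (LipschitzWith.of_dist_le_mul fun u v => ?_)
    simp only [NNReal.coe_one, one_mul, dist_eq_norm]
    exact hσlip u v
  have hτcont : Continuous (cτB : CohenB A → A) := by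
    refine LipschitzWith.continuous (K := 1) (LipschitzWith.of_dist_le_mul fun u v => ?_)
    simp only [NNReal.coe_one, one_mul, dist_eq_norm]
    exact hτlip u v
  have hσL : cσB Lq = 0 := by
    have h1 : Filter.Tendsto (fun n => cσB (U n).val) Filter.atTop (nhds (cσB Lq)) :=
      (hσcont.tendsto Lq).comp hLq
    have h2 : Filter.Tendsto (fun n => cσB (U n).val) Filter.atTop (nhds 0) := by
      simp_rw [hσ]
      rw [show (0:ℂ) = ((0:ℝ):ℂ) by norm_num]
      exact (Complex.continuous_ofReal.tendsto 0).comp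
        (tendsto_pow_atTop_nhds_zero_of_lt_one h1c0.le h1c1)
    exact tendsto_nhds_unique h1 h2
  set a : A := cτB Lq with ha
  have hid : ∀ n, x = cΦ act (cΦ act x ((U n)⁻¹).val)
      (U n).val := by
    intro n
    rw [← cΦ_mul act hadd₁ hadd₂ hsmul₁ hsmul₂ hassoc hcontr, Units.inv_mul,
      cΦ_one act hadd₁ hadd₂ hsmul₁ hsmul₂ hassoc hcontr]
  have hbound : Filter.Tendsto
      (fun n => cΦ act (cΦ act x ((U n)⁻¹).val) (U n).val)
      Filter.atTop (nhds (cΦ act x' Lq)) := by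
    rw [tendsto_iff_norm_sub_tendsto_zero]
    have hb : ∀ n, ‖cΦ act (cΦ act x ((U n)⁻¹).val) (U n).val
        - cΦ act x' Lq‖
        ≤ ‖cΦ act x ((U n)⁻¹).val - x'‖ * ‖(U n).val‖
          + ‖x'‖ * ‖(U n).val - Lq‖ := by
      intro n
      have hsplit : cΦ act (cΦ act x ((U n)⁻¹).val) (U n).val
          - cΦ act x' Lq
          = cΦ act (cΦ act x ((U n)⁻¹).val - x') (U n).val
            + cΦ act x' ((U n).val - Lq) := by
        rw [cΦ_sub₁ act hadd₁ hadd₂ hsmul₁ hsmul₂ hassoc hcontr,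
          cΦ_sub act hadd₁ hadd₂ hsmul₁ hsmul₂ hassoc hcontr]
        abel
      rw [hsplit]
      calc ‖cΦ act (cΦ act x ((U n)⁻¹).val - x') (U n).val
            + cΦ act x' ((U n).val - Lq)‖
          ≤ ‖cΦ act (cΦ act x ((U n)⁻¹).val - x') (U n).val‖
            + ‖cΦ act x' ((U n).val - Lq)‖ := norm_add_le _ _
        _ ≤ ‖cΦ act x ((U n)⁻¹).val - x'‖ * ‖(U n).val‖
            + ‖x'‖ * ‖(U n).val - Lq‖ := by
            gcongr <;> exact cΦ_norm act hadd₁ hadd₂ hsmul₁ hsmul₂ hassoc hcontr _ _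
    have h1 : Filter.Tendsto (fun n => ‖cΦ act x ((U n)⁻¹).val - x'‖)
        Filter.atTop (nhds 0) := tendsto_iff_norm_sub_tendsto_zero.mp hx'
    have h2 : Filter.Tendsto (fun n => ‖(U n).val‖) Filter.atTop (nhds ‖Lq‖) :=
      hLq.norm
    have h3 : Filter.Tendsto (fun n => ‖(U n).val - Lq‖) Filter.atTop (nhds 0) :=
      tendsto_iff_norm_sub_tendsto_zero.mp hLq
    have h4 : Filter.Tendsto
        (fun n => ‖cΦ act x ((U n)⁻¹).val - x'‖ * ‖(U n).val‖
          + ‖x'‖ * ‖(U n).val - Lq‖) Filter.atTop (nhds 0) := by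
      have := (h1.mul h2).add (h3.const_mul ‖x'‖)
      simpa using this
    exact squeeze_zero (fun n => norm_nonneg _) hb h4
  have hconst : (fun n => cΦ act (cΦ act x ((U n)⁻¹).val)
      (U n).val) = fun _ => x := funext (fun n => (hid n).symm)
  rw [hconst] at hbound
  have hxeq : x = cΦ act x' Lq := tendsto_nhds_unique tendsto_const_nhds hbound
  refine ⟨x', a, ?_⟩
  rw [hxeq]
  show act x' (cτB Lq) + cσB Lq • x' = act x' a
  rw [hσL, zero_smul, add_zero, ha]

end Phi

end CohenAux


/-- Cohen's Factorisation Theorem for non-degenerate modules: let `A` be a Banach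
algebra with a bounded (e.g. contractive) approximate identity and `E` a Banach right
`A`-module with contractive action `act`.  Then the linear span of
`{act x a : x ∈ E, a ∈ A}` is dense in `E` iff every `x ∈ E` factors as `x = act x' a`. -/
theorem stmt13 {A : Type*} [NonUnitalNormedRing A] [NormedSpace ℂ A]
    [IsScalarTower ℂ A A] [SMulCommClass ℂ A A] [CompleteSpace A]
    {E : Type*} [NormedAddCommGroup E] [NormedSpace ℂ E] [CompleteSpace E]
    (act : E → A → E)
    (hadd₁ : ∀ x y a, act (x + y) a = act x a + act y a)
    (hadd₂ : ∀ x a b, act x (a + b) = act x a + act x b)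
    (hsmul₁ : ∀ (c : ℂ) x a, act (c • x) a = c • act x a)
    (hsmul₂ : ∀ (c : ℂ) x a, act x (c • a) = c • act x a)
    (hassoc : ∀ x a b, act x (a * b) = act (act x a) b)
    (hcontr : ∀ x a, ‖act x a‖ ≤ ‖x‖ * ‖a‖)
    (M : ℝ) (hM : 1 ≤ M)
    (hbai : ∀ (s : Finset A) (ε : ℝ), 0 < ε →
      ∃ e : A, ‖e‖ ≤ M ∧ ∀ a ∈ s, ‖a * e - a‖ < ε ∧ ‖e * a - a‖ < ε) :
    Dense (↑(Submodule.span ℂ {y : E | ∃ (x : E) (a : A), y = act x a}) : Set E) ↔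
      ∀ x : E, ∃ (x' : E) (a : A), x = act x' a := by
  constructor
  · intro hdense x
    exact cohen_hard act hadd₁ hadd₂ hsmul₁ hsmul₂ hassoc hcontr M hM hbai hdense x
  · intro hfact
    have h2 : (↑(Submodule.span ℂ {y : E | ∃ (x : E) (a : A), y = act x a}) : Set E)
        = Set.univ := by
      apply Set.eq_univ_of_forall
      intro y
      exact Submodule.subset_span (hfact y)
    rw [h2]
    exact dense_univ
end

section
/- A unital ring (or algebra) A is classically semisimple (a finite direct sum of minimal right ideals, equivalently every module is semisimple) if and only if every maximal right ideal of A is a direct summand of A as a right A-module. -/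
/-!
A complement of a coatom is an atom, so if every coatom is complemented, the join of the atoms
(the socle) lies below no coatom; in a coatomic lattice it is therefore `⊤`, and a compactly
generated modular lattice whose atoms join to `⊤` is complemented. The submodule lattice of `A`
over `Aᵐᵒᵖ` is coatomic because `A` is generated by `1`, and semisimplicity of `A` as a right
module is equivalent to that as a left module by Wedderburn–Artin.
-/

theorem sSup_atoms_eq_top_of_forall_isCoatom_exists_isCompl {α : Type*} [CompleteLattice α]
    [IsModularLattice α] [IsCoatomic α] (h : ∀ a : α, IsCoatom a → ∃ b, IsCompl a b) :
    sSup {a : α | IsAtom a} = ⊤ := by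
  by_contra hne
  obtain ⟨c, hc, hle⟩ := (eq_top_or_exists_le_coatom (sSup {a : α | IsAtom a})).resolve_left hne
  obtain ⟨b, hcb⟩ := h c hc
  have hb : IsAtom b := hcb.symm.isAtom_iff_isCoatom.mpr hc
  exact hb.1 (hcb.disjoint.symm.eq_bot_of_le ((le_sSup (s := {a : α | IsAtom a}) hb).trans hle))

theorem complementedLattice_iff_forall_isCoatom_exists_isCompl {α : Type*} [CompleteLattice α]
    [IsModularLattice α] [IsCompactlyGenerated α] [IsCoatomic α] :
    ComplementedLattice α ↔ ∀ a : α, IsCoatom a → ∃ b, IsCompl a b :=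
  ⟨fun _ a _ ↦ exists_isCompl a, fun h ↦
    complementedLattice_of_sSup_atoms_eq_top
      (sSup_atoms_eq_top_of_forall_isCoatom_exists_isCompl h)⟩

theorem isSemisimpleModule_iff_forall_isCoatom_exists_isCompl (R M : Type*) [Ring R]
    [AddCommGroup M] [Module R M] [IsCoatomic (Submodule R M)] :
    IsSemisimpleModule R M ↔ ∀ I : Submodule R M, IsCoatom I → ∃ J, IsCompl I J :=
  (isSemisimpleModule_iff R M).trans complementedLattice_iff_forall_isCoatom_exists_isCompl

theorem isSemisimpleRing_iff_isSemisimpleModule_mulOpposite (A : Type*) [Ring A] :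
    IsSemisimpleRing A ↔ IsSemisimpleModule Aᵐᵒᵖ A :=
  isSemisimpleRing_mulOpposite_iff.symm.trans
    (MulOpposite.opLinearEquiv Aᵐᵒᵖ).symm.isSemisimpleModule_iff

/-- A unital ring is classically semisimple iff every maximal right ideal
(a coatom among submodules of `A` as a right `A`-module, i.e. a module over `Aᵐᵒᵖ`)
is a direct summand. -/
theorem stmt14 (A : Type*) [Ring A] :
    IsSemisimpleRing A ↔
      ∀ I : Submodule Aᵐᵒᵖ A, IsCoatom I → ∃ J : Submodule Aᵐᵒᵖ A, IsCompl I J := by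
  have : Module.Finite Aᵐᵒᵖ A := .equiv (MulOpposite.opLinearEquiv Aᵐᵒᵖ).symm
  rw [isSemisimpleRing_iff_isSemisimpleModule_mulOpposite,
    isSemisimpleModule_iff_forall_isCoatom_exists_isCompl]
end

section
/- Let I be a right ideal of a unital ring A. Let S₁ be the set of all elements f(x) where x ∈ A/I and f : A/I → A ranges over right A-module maps, and S₂ = {ab : a, b ∈ A, ay = 0 for all y ∈ I}. Then S₁ = S₂, and the linear span of S₁ is a two-sided ideal of A. -/
private lemma mulLeft_aux {A : Type*} [Ring A] (c : A) :
    ∃ g : A →ₗ[Aᵐᵒᵖ] A, ∀ x, g x = c * x :=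
  ⟨{ toFun := fun x => c * x
     map_add' := fun x y => mul_add c x y
     map_smul' := fun m x => by
       simp [MulOpposite.smul_eq_mul_unop, mul_assoc] }, fun _ => rfl⟩

/-- For a right ideal `I` of a unital ring `A`: the set `S₁` of all values of right
`A`-module maps `A/I → A` equals `S₂ = {a * b : a, b ∈ A, a * y = 0 ∀ y ∈ I}`, and the
additive (linear) span of `S₁` is a two-sided ideal of `A`. -/
theorem stmt16 {A : Type*} [Ring A] (I : Submodule Aᵐᵒᵖ A) :
    ({z : A | ∃ (f : (A ⧸ I) →ₗ[Aᵐᵒᵖ] A) (x : A ⧸ I), z = f x} =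
        {z : A | ∃ a b : A, (∀ y ∈ I, a * y = 0) ∧ z = a * b}) ∧
      (∀ z ∈ Submodule.span ℤ {z : A | ∃ (f : (A ⧸ I) →ₗ[Aᵐᵒᵖ] A) (x : A ⧸ I), z = f x},
        ∀ c : A,
          c * z ∈ Submodule.span ℤ {z : A | ∃ (f : (A ⧸ I) →ₗ[Aᵐᵒᵖ] A) (x : A ⧸ I), z = f x} ∧
          z * c ∈ Submodule.span ℤ {z : A | ∃ (f : (A ⧸ I) →ₗ[Aᵐᵒᵖ] A) (x : A ⧸ I), z = f x}) := by
  set S₁ : Set A := {z : A | ∃ (f : (A ⧸ I) →ₗ[Aᵐᵒᵖ] A) (x : A ⧸ I), z = f x} with hS₁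
  constructor
  · ext z
    simp only [hS₁, Set.mem_setOf_eq]
    constructor
    · rintro ⟨f, x, rfl⟩
      obtain ⟨b, rfl⟩ := Submodule.Quotient.mk_surjective I x
      refine ⟨f (Submodule.Quotient.mk 1), b, ?_, ?_⟩
      · intro y hy
        have : f (Submodule.Quotient.mk 1) * y
            = f ((MulOpposite.op y) • Submodule.Quotient.mk (1 : A)) := by
          rw [map_smul]; rfl
        rw [this]
        have h1 : (MulOpposite.op y) • Submodule.Quotient.mk (1 : A)
            = (Submodule.Quotient.mk y : A ⧸ I) := by
          rw [← Submodule.Quotient.mk_smul]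
          simp [MulOpposite.smul_eq_mul_unop]
        rw [h1, (Submodule.Quotient.mk_eq_zero I).2 hy, map_zero]
      · have : (Submodule.Quotient.mk b : A ⧸ I)
            = (MulOpposite.op b) • Submodule.Quotient.mk (1 : A) := by
          rw [← Submodule.Quotient.mk_smul]
          simp [MulOpposite.smul_eq_mul_unop]
        rw [this, map_smul]; rfl
    · rintro ⟨a, b, ha, rfl⟩
      obtain ⟨g, hg⟩ := mulLeft_aux (A := A) a
      have hI : I ≤ LinearMap.ker g := by
        intro y hy
        simp [LinearMap.mem_ker, hg, ha y hy]
      exact ⟨I.liftQ g hI, Submodule.Quotient.mk b, by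
        rw [Submodule.liftQ_apply, hg]⟩
  · intro z hz c
    constructor
    · induction hz using Submodule.span_induction with
      | mem w hw =>
        obtain ⟨f, x, rfl⟩ := hw
        apply Submodule.subset_span
        obtain ⟨g, hg⟩ := mulLeft_aux (A := A) c
        exact ⟨g.comp f, x, (hg _).symm⟩
      | zero => simp only [mul_zero, zero_mul] at *; exact (Submodule.span ℤ S₁).zero_mem
      | add x y _ _ hx hy => rw [mul_add]; exact (Submodule.span ℤ S₁).add_mem hx hy
      | smul n x _ hx =>
        have : c * (n • x) = n • (c * x) := by
          rw [zsmul_eq_mul, zsmul_eq_mul, ← mul_assoc, ← (Int.cast_commute n c).eq, mul_assoc]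
        rw [this]; exact (Submodule.span ℤ S₁).smul_mem n hx
    · induction hz using Submodule.span_induction with
      | mem w hw =>
        obtain ⟨f, x, rfl⟩ := hw
        apply Submodule.subset_span
        refine ⟨f, (MulOpposite.op c) • x, ?_⟩
        rw [map_smul]; rfl
      | zero => simp only [mul_zero, zero_mul] at *; exact (Submodule.span ℤ S₁).zero_mem
      | add x y _ _ hx hy => rw [add_mul]; exact (Submodule.span ℤ S₁).add_mem hx hy
      | smul n x _ hx =>
        have : (n • x) * c = n • (x * c) := by
          rw [zsmul_eq_mul, zsmul_eq_mul, mul_assoc]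
        rw [this]; exact (Submodule.span ℤ S₁).smul_mem n hx
end

section
/- Let (A, E) be an exact category, let M be its admissible monomorphisms, and suppose every object of A embeds via an admissible monomorphism into an M-injective object. If, for an object E and n ≥ 1, there exists an exact sequence of admissible morphisms E ↣ I⁰ → ⋯ → I^{n-1} ↠ I^n with all I^m M-injective, then for every exact sequence of admissible morphisms E ↣ J⁰ → ⋯ → J^{n-1} ↠ F with all J^m M-injective, the object F is M-injective. -/
open CategoryTheory CategoryTheory.Limits

variable {C : Type*} [Category C] [Preadditive C]

/-- `μ` is an admissible monomorphism of the exact structure `S`. -/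
def AdmMono (S : ExactStructure C) {X Y : C} (μ : X ⟶ Y) : Prop :=
  ∃ (W : C) (π : Y ⟶ W), S.E μ π

/-- `π` is an admissible epimorphism of the exact structure `S`. -/
def AdmEpi (S : ExactStructure C) {Y Z : C} (π : Y ⟶ Z) : Prop :=
  ∃ (W : C) (μ : W ⟶ Y), S.E μ π

/-- `I` is injective w.r.t. the admissible monomorphisms of `S`. -/
def MInj (S : ExactStructure C) (I : C) : Prop :=
  ∀ ⦃X Y : C⦄ (μ : X ⟶ Y), AdmMono S μ → ∀ f : X ⟶ I, ∃ g : Y ⟶ I, μ ≫ g = f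

/-- `P` is projective w.r.t. the admissible epimorphisms of `S`. -/
def PProj (S : ExactStructure C) (P : C) : Prop :=
  ∀ ⦃Y Z : C⦄ (π : Y ⟶ Z), AdmEpi S π → ∀ f : P ⟶ Z, ∃ g : P ⟶ Y, g ≫ π = f

/-!
Dimension shifting.  Call `X` and `Y` stably equivalent if `U ⊞ X ≅ V ⊞ Y` for some
`M`-injectives `U`, `V`.  By Schanuel's lemma, if `X ↣ I ↠ X'` and `Y ↣ J ↠ Y'` are
conflations with `I`, `J` injective and `X`, `Y` are stably equivalent, then so are `X'`
and `Y'`: one adds the injective summands to the conflations and pushes out.  Hence the `n`-th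
cosyzygies of `E` along any two injective resolutions are stably equivalent, and a direct
summand of an injective is injective.
-/

section MInj

lemma MInj.of_isZero (S : ExactStructure C) {Z : C} (hZ : IsZero Z) : MInj S Z :=
  fun _ _ _ _ _ ↦ ⟨0, hZ.eq_of_tgt _ _⟩

variable {S : ExactStructure C}

lemma MInj.of_retract {P Q : C} (hP : MInj S P) (s : Q ⟶ P) (r : P ⟶ Q) (hsr : s ≫ r = 𝟙 Q) :
    MInj S Q := by
  intro X Y μ hμ f
  obtain ⟨g, hg⟩ := hP μ hμ (f ≫ s)
  exact ⟨g ≫ r, by rw [← Category.assoc, hg, Category.assoc, hsr, Category.comp_id]⟩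

lemma MInj.of_iso {P Q : C} (hP : MInj S P) (e : P ≅ Q) : MInj S Q :=
  hP.of_retract e.inv e.hom e.inv_hom_id

lemma MInj.biprod [HasBinaryBiproducts C] {A B : C} (hA : MInj S A) (hB : MInj S B) :
    MInj S (A ⊞ B) := by
  intro X Y μ hμ f
  obtain ⟨g₁, hg₁⟩ := hA μ hμ (f ≫ biprod.fst)
  obtain ⟨g₂, hg₂⟩ := hB μ hμ (f ≫ biprod.snd)
  exact ⟨biprod.lift g₁ g₂, by ext <;> simp [hg₁, hg₂]⟩

end MInj

def isColimitCokernelCoforkOfIsPushout {X Y T Q Z : C} {μ : X ⟶ Y} {f : X ⟶ T}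
    {g : Y ⟶ Q} {h : T ⟶ Q} (sq : IsPushout μ f g h) {q₀ : Y ⟶ Z} {w₀ : μ ≫ q₀ = 0}
    (hq₀ : IsColimit (CokernelCofork.ofπ q₀ w₀)) {q : Q ⟶ Z} (hgq : g ≫ q = q₀)
    (w : h ≫ q = 0) : IsColimit (CokernelCofork.ofπ q w) :=
  have hdesc {Z' : C} (t : Q ⟶ Z') (ht : h ≫ t = 0) : μ ≫ g ≫ t = 0 ≫ g ≫ t := by
    rw [← Category.assoc, sq.w, Category.assoc, ht, comp_zero, zero_comp]
  have : Epi q₀ := epi_of_isColimit_cofork hq₀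
  CokernelCofork.IsColimit.ofπ q w
    (fun t ht ↦ Cofork.IsColimit.desc hq₀ (g ≫ t) (hdesc t ht))
    (fun t ht ↦ sq.hom_ext
      (by simpa [reassoc_of% hgq] using Cofork.IsColimit.π_desc' hq₀ _ (hdesc t ht))
      (by simp [reassoc_of% w, ht]))
    (fun t ht m hm ↦ by
      rw [← cancel_epi q₀]
      exact (by rw [← hgq, Category.assoc, hm] : q₀ ≫ m = g ≫ t).trans
        (Cofork.IsColimit.π_desc' hq₀ _ (hdesc t ht)).symm)

namespace ExactStructure

variable (S : ExactStructure C)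

lemma comp_eq_zero {X Y Z : C} {μ : X ⟶ Y} {π : Y ⟶ Z} (hE : S.E μ π) : μ ≫ π = 0 :=
  (S.pair hE).1

lemma E_of_isColimit_s19 {X Y Z : C} {μ : X ⟶ Y} (hμ : AdmMono S μ) {q : Y ⟶ Z}
    (w : μ ≫ q = 0) (hq : IsColimit (CokernelCofork.ofπ q w)) : S.E μ q := by
  obtain ⟨W, π, hE⟩ := hμ
  obtain ⟨_, _, ⟨hπ⟩⟩ := S.pair hE
  let e : W ≅ Z := hπ.coconePointUniqueUpToIso hq
  have he : π ≫ e.hom = q :=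
    hπ.comp_coconePointUniqueUpToIso_hom hq WalkingParallelPair.one
  exact S.iso_closed (Iso.refl X) (Iso.refl Y) e (by simp) (by simpa using he) hE

lemma isZero_of_E_id {W X : C} {μ : W ⟶ X} (hE : S.E μ (𝟙 X)) : IsZero W := by
  obtain ⟨w, ⟨hμ⟩, _⟩ := S.pair hE
  have : Mono μ := mono_of_isLimit_fork hμ
  rw [Category.comp_id] at w
  rw [IsZero.iff_id_eq_zero, ← cancel_mono μ]
  simpa using w

lemma hasZeroObject (S : ExactStructure C) (X : C) : HasZeroObject C :=
  have ⟨_, _, hE⟩ := S.E0op X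
  (S.isZero_of_E_id hE).hasZeroObject

/-- The coproduct `X ⨿ B` is the pushout of `X ← 0 → B`, where `0 ↣ X` is the kernel of `𝟙 X`. -/
lemma hasBinaryBiproducts (S : ExactStructure C) : HasBinaryBiproducts C := by
  have (X B : C) : HasColimit (Limits.pair X B) := by
    obtain ⟨W, μ, hE⟩ := S.E0op X
    obtain ⟨_, g, h, _, ⟨hp⟩, _⟩ := S.E2 (0 : W ⟶ B) ⟨X, 𝟙 X, hE⟩
    exact ⟨_, isCoproductOfIsInitialIsPushout g h μ 0 (S.isZero_of_E_id hE).isInitial hp⟩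
  have := hasBinaryCoproducts_of_hasColimit_pair C
  exact .of_hasBinaryCoproducts

lemma admMono_of_isPushout {X Y T Q : C} {μ : X ⟶ Y} {f : X ⟶ T} {g : Y ⟶ Q} {h : T ⟶ Q}
    (sq : IsPushout μ f g h) (hμ : AdmMono S μ) : AdmMono S h := by
  obtain ⟨P₂, _, h₂, _, ⟨hp₂⟩, W, π, hE⟩ := S.E2 f hμ
  let e : P₂ ≅ Q := (IsPushout.of_isColimit hp₂).isoIsPushout _ _ sq
  have he : h₂ ≫ e.hom = h := IsPushout.inr_isoIsPushout_hom _ _ _ sq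
  exact ⟨W, e.inv ≫ π, S.iso_closed (Iso.refl T) e (Iso.refl W)
    (by simpa using he) (by rw [Iso.refl_hom, Category.comp_id, Iso.hom_inv_id_assoc]) hE⟩

lemma exists_E_of_isPushout {X Y T Q Z : C} {μ : X ⟶ Y} {f : X ⟶ T} {g : Y ⟶ Q}
    {h : T ⟶ Q} (sq : IsPushout μ f g h) {q₀ : Y ⟶ Z} (hE : S.E μ q₀) :
    ∃ q : Q ⟶ Z, g ≫ q = q₀ ∧ S.E h q := by
  obtain ⟨w₀, _, ⟨hq₀⟩⟩ := S.pair hE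
  let q := sq.desc q₀ 0 (by rw [w₀, comp_zero])
  have w : h ≫ q = 0 := sq.inr_desc _ _ _
  refine ⟨q, sq.inl_desc _ _ _, S.E_of_isColimit_s19 (S.admMono_of_isPushout sq ⟨Z, q₀, hE⟩) w ?_⟩
  exact isColimitCokernelCoforkOfIsPushout sq hq₀ (sq.inl_desc _ _ _) w

lemma nonempty_splitting {A P Q : C} {ι : A ⟶ P} {p : P ⟶ Q} (hE : S.E ι p) (hA : MInj S A) :
    Nonempty (ShortComplex.mk ι p (S.comp_eq_zero hE)).Splitting := by
  obtain ⟨w, _, ⟨hp⟩⟩ := S.pair hE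
  have : Epi p := epi_of_isColimit_cofork hp
  obtain ⟨r, hr⟩ := hA ι ⟨Q, p, hE⟩ (𝟙 A)
  obtain ⟨s, hs⟩ := CokernelCofork.IsColimit.desc' hp (𝟙 P - r ≫ ι) (by simp [reassoc_of% hr])
  simp only [Cofork.π_ofπ] at hs
  refine ⟨{ r, s, f_r := hr, s_g := ?_, id := by simp [hs] }⟩
  rw [← cancel_epi p, reassoc_of% hs]
  simp [w]

variable [HasBinaryBiproducts C]

lemma schanuel {E I X J Y : C} {μ : E ⟶ I} {π : I ⟶ X} {μ' : E ⟶ J} {π' : J ⟶ Y}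
    (hE : S.E μ π) (hE' : S.E μ' π') (hI : MInj S I) (hJ : MInj S J) :
    Nonempty (J ⊞ X ≅ I ⊞ Y) := by
  obtain ⟨_, _, _, _, ⟨hp⟩, _⟩ := S.E2 μ' ⟨X, π, hE⟩
  have sq := IsPushout.of_isColimit hp
  obtain ⟨_, _, hJP⟩ := S.exists_E_of_isPushout sq hE
  obtain ⟨_, _, hIP⟩ := S.exists_E_of_isPushout sq.flip hE'
  obtain ⟨σJ⟩ := S.nonempty_splitting hJP hJ
  obtain ⟨σI⟩ := S.nonempty_splitting hIP hI
  exact ⟨σJ.isoBinaryBiproduct.symm ≪≫ σI.isoBinaryBiproduct⟩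

lemma E_biprod_map_id [HasZeroObject C] {X Y Z : C} {f : X ⟶ Y} {g : Y ⟶ Z} (hE : S.E f g)
    (B : C) : S.E (biprod.map (𝟙 B) f) (biprod.snd ≫ g) := by
  have sq : IsPushout f biprod.inr biprod.inr (biprod.map (𝟙 B) f) :=
    IsPushout.of_left (by simpa using (IsPushout.of_has_biproduct B Y).flip) (by simp)
      (IsPushout.of_has_biproduct B X).flip
  obtain ⟨q, hq, hEq⟩ := S.exists_E_of_isPushout sq hE
  have hinl : biprod.inl ≫ q = 0 := by
    simpa using biprod.inl ≫= S.comp_eq_zero hEq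
  obtain rfl : q = biprod.snd ≫ g := by ext <;> simp [hinl, hq]
  exact hEq

end ExactStructure

def StablyEquivalent [HasBinaryBiproducts C] (S : ExactStructure C) (X Y : C) : Prop :=
  ∃ U V : C, MInj S U ∧ MInj S V ∧ Nonempty (U ⊞ X ≅ V ⊞ Y)

namespace StablyEquivalent

variable [HasBinaryBiproducts C] {S : ExactStructure C}

open ZeroObject in
lemma refl [HasZeroObject C] (X : C) : StablyEquivalent S X X :=
  ⟨0, 0, .of_isZero S (isZero_zero C), .of_isZero S (isZero_zero C), ⟨Iso.refl _⟩⟩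

lemma of_conflations [HasZeroObject C] {X Y X' Y' I J : C} (hXY : StablyEquivalent S X Y)
    {ν : X ⟶ I} {ρ : I ⟶ X'} {ν' : Y ⟶ J} {ρ' : J ⟶ Y'}
    (hE : S.E ν ρ) (hI : MInj S I) (hE' : S.E ν' ρ') (hJ : MInj S J) :
    StablyEquivalent S X' Y' := by
  obtain ⟨U, V, hU, hV, ⟨e⟩⟩ := hXY
  have hUX := S.E_biprod_map_id hE U
  have hVY : S.E (e.hom ≫ biprod.map (𝟙 V) ν') (biprod.snd ≫ ρ') :=
    S.iso_closed e.symm (Iso.refl _) (Iso.refl _) (by simp) (by simp) (S.E_biprod_map_id hE' V)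
  obtain ⟨e'⟩ := S.schanuel hUX hVY (hU.biprod hI) (hV.biprod hJ)
  exact ⟨V ⊞ J, U ⊞ I, hV.biprod hJ, hU.biprod hI, ⟨e'⟩⟩

lemma minj {X Y : C} (hXY : StablyEquivalent S X Y) (hX : MInj S X) : MInj S Y := by
  obtain ⟨U, V, hU, -, ⟨e⟩⟩ := hXY
  exact ((hU.biprod hX).of_iso e).of_retract biprod.inr biprod.snd biprod.inr_snd

end StablyEquivalent

/-- An exact sequence `E ↣ J⁰ → ⋯ → J^{n-1} ↠ F` is encoded by the conflations
`(μ j, π j)`, `j < n`, with `G 0 = E` and `G n = F`; its admissible morphisms are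
`π j ≫ μ (j + 1)`. -/
theorem stmt19_general (S : ExactStructure C) (n : ℕ)
    (G J : ℕ → C) (μ : ∀ j, G j ⟶ J j) (π : ∀ j, J j ⟶ G (j + 1))
    (hpairs : ∀ j < n, S.E (μ j) (π j))
    (hinj : ∀ j < n, MInj S (J j)) (hlast : MInj S (G n))
    (G' J' : ℕ → C) (μ' : ∀ j, G' j ⟶ J' j) (π' : ∀ j, J' j ⟶ G' (j + 1))
    (hstart : G' 0 = G 0)
    (hpairs' : ∀ j < n, S.E (μ' j) (π' j))
    (hinj' : ∀ j < n, MInj S (J' j)) :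
    MInj S (G' n) := by
  have := S.hasZeroObject (G 0)
  have := S.hasBinaryBiproducts
  have cosyzygies : ∀ j ≤ n, StablyEquivalent S (G j) (G' j) := by
    intro j
    induction j with
    | zero => intro _; rw [hstart]; exact .refl _
    | succ j ih =>
      intro hj
      exact (ih (by omega)).of_conflations (hpairs j hj) (hinj j hj) (hpairs' j hj) (hinj' j hj)
  exact (cosyzygies n le_rfl).minj hlast

/-- The injective dimension theorem, (ii) ⇒ (i): in an exact category with enough
injectives, an exact sequence of admissible morphisms
`E ↣ J⁰ → ⋯ → J^{n-1} ↠ F` is encoded by pairs `(μ j : G j ⟶ J j, π j : J j ⟶ G (j+1))`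
in the exact structure for `j < n`, with `G 0 = E` and `G n` the final object; the
admissible morphisms of the sequence are `π j ≫ μ (j+1)`.  If `E` admits such a
sequence with all `J j` (`j < n`) and the final object `G n` injective, then for every
such sequence starting at `E` with all `J' j` injective, the final object `G' n` is
injective. -/
theorem stmt19 (S : ExactStructure C) (n : ℕ) (hn : 1 ≤ n)
    (henough : ∀ X : C, ∃ (I : C) (f : X ⟶ I), MInj S I ∧ AdmMono S f)
    (G J : ℕ → C) (μ : ∀ j, G j ⟶ J j) (π : ∀ j, J j ⟶ G (j + 1))
    (hpairs : ∀ j < n, S.E (μ j) (π j))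
    (hinj : ∀ j < n, MInj S (J j)) (hlast : MInj S (G n))
    (G' J' : ℕ → C) (μ' : ∀ j, G' j ⟶ J' j) (π' : ∀ j, J' j ⟶ G' (j + 1))
    (hstart : G' 0 = G 0)
    (hpairs' : ∀ j < n, S.E (μ' j) (π' j))
    (hinj' : ∀ j < n, MInj S (J' j)) :
    MInj S (G' n) :=
  stmt19_general S n G J μ π hpairs hinj hlast G' J' μ' π' hstart hpairs' hinj'
end
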